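/- Let (b_1,…,b_d) be linearly independent vectors of ℝ^n and let i ∈ {1,…,d} be such that ‖b_j*‖ ≤ ‖b_1‖/√d for all j ≥ i. Then the number of integer vectors (z_i,…,z_d) ∈ ℤ^{d−i+1} satisfying ‖Σ_{j=i}^{d} z_j b_j(i)‖ ≤ ‖b_1‖ is at least 2^{−(d−i+1)} · ∏_{j=i}^{d} ‖b_1‖/(√d·‖b_j*‖). -/

import Mathlib

open scoped BigOperators

/-- Gram–Schmidt orthogonalisation `bᵢ*` of a finite family of vectors. -/
noncomputable def gso {n d : ℕ} (b : Fin d → EuclideanSpace ℝ (Fin n)) (i : Fin d) :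
    EuclideanSpace ℝ (Fin n) :=
  @InnerProductSpace.gramSchmidt ℝ (EuclideanSpace ℝ (Fin n)) _ _ _ (Fin d) _ _ (Finite.to_wellFoundedLT) b i

/-- `gsProj b i j` is `b_j(i)`: the orthogonal projection of `b j` onto the orthogonal
complement of the span of `b k`, `k < i`. -/
noncomputable def gsProj {n d : ℕ} (b : Fin d → EuclideanSpace ℝ (Fin n)) (i j : Fin d) :
    EuclideanSpace ℝ (Fin n) :=
  (Submodule.orthogonalProjectionOnto (Submodule.span ℝ (b '' {k | k < i}))ᗮ (b j) : EuclideanSpace ℝ (Fin n))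

/-- A family is HKZ-reduced when, for every `i`, `‖bᵢ*‖` is the minimum of the lattice
generated by `b_i(i), …, b_d(i)`,  i.e. every nonzero integer combination of the projected
vectors is at least as long as `bᵢ*`. -/
def IsHKZReduced {n d : ℕ} (b : Fin d → EuclideanSpace ℝ (Fin n)) : Prop :=
  ∀ i : Fin d, ∀ x : Fin d → ℤ,
    (∑ j ∈ Finset.Ici i, (x j : ℝ) • gsProj b i j) ≠ 0 →
    ‖gso b i‖ ≤ ‖∑ j ∈ Finset.Ici i, (x j : ℝ) • gsProj b i j‖

/-- A family is `k`-BKZ-reduced when every block `(b_i(i), …, b_{i+k-1}(i))` is HKZ-reduced. -/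
def IsBKZReduced {n d : ℕ} (k : ℕ) (b : Fin d → EuclideanSpace ℝ (Fin n)) : Prop :=
  ∀ i : Fin d, ∀ h : (i : ℕ) + k ≤ d,
    IsHKZReduced (fun t : Fin k => gsProj b i ⟨(i : ℕ) + (t : ℕ), by have := t.isLt; omega⟩)

/-- The minimum of the lattice generated by the family `b`. -/
noncomputable def latticeMin {n d : ℕ} (b : Fin d → EuclideanSpace ℝ (Fin n)) : ℝ :=
  sInf {r | ∃ x : Fin d → ℤ, (∑ i, (x i : ℝ) • b i) ≠ 0 ∧ r = ‖∑ i, (x i : ℝ) • b i‖}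

/-!
Write `v = ∑_{j ≥ i} z_j b_j(i)` in the orthogonal family `b_k*` (`k ≥ i`): its
`b_k*`-coordinate is `z_k + ∑_{j > k} μ_{j,k} z_j`, so
`‖v‖² = ∑_k (z_k + ∑_{j > k} μ_{j,k} z_j)² ‖b_k*‖²` is triangular. Choosing `z` from the top
coordinate down, each `z_k` may be any integer within `R_k` of `-∑_{j > k} μ_{j,k} z_j`, and
there are at least `2R_k - 1 ≥ R_k` of these when `R_k ≥ 1`. For `R_k = ‖b_1‖ / (√d ‖b_k*‖) ≥ 1`
every such `z` has `‖v‖² ≤ (d - i + 1) ‖b_1‖² / d ≤ ‖b_1‖²`, so the ellipsoid holds at least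
`∏_k R_k` integer points; finiteness of the ellipsoid comes from the same triangular structure.
-/

open Finset Function
open scoped InnerProductSpace

lemma mem_Icc_ceil_floor_iff {R t : ℝ} {c : ℤ} :
    c ∈ Icc ⌈-R - t⌉ ⌊R - t⌋ ↔ |(c : ℝ) + t| ≤ R := by
  rw [mem_Icc, Int.ceil_le, Int.le_floor, abs_le]
  constructor <;> rintro ⟨h₁, h₂⟩ <;> constructor <;> linarith

lemma two_mul_sub_one_le_card_Icc_ceil_floor (R t : ℝ) :
    2 * R - 1 ≤ (#(Icc ⌈-R - t⌉ ⌊R - t⌋) : ℝ) := by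
  have h₁ : (⌈-R - t⌉ : ℝ) < -R - t + 1 := Int.ceil_lt_add_one _
  have h₂ : R - t - 1 < (⌊R - t⌋ : ℝ) := Int.sub_one_lt_floor _
  calc 2 * R - 1 ≤ ((⌊R - t⌋ + 1 - ⌈-R - t⌉ : ℤ) : ℝ) := by push_cast; linarith
    _ ≤ _ := by rw [Int.card_Icc]; exact_mod_cast Int.self_le_toNat _

section TriangularBox

variable {ι : Type*} (s : Finset ι) (R : ι → ℝ) (f : ι → (ι → ℤ) → ℝ)

def triangularBox : Set (ι → ℤ) :=
  {z | (∀ k ∉ s, z k = 0) ∧ ∀ k ∈ s, |(z k : ℝ) + f k z| ≤ R k}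

lemma triangularBox_empty : triangularBox ∅ R f = {0} := by
  ext z
  simp [triangularBox, funext_iff]

variable {s R f} [LinearOrder ι]

lemma update_mem_triangularBox_insert_iff
    (hf : ∀ k z z', (∀ j, k < j → z j = z' j) → f k z = f k z')
    {a : ι} (ha : ∀ x ∈ s, a < x) {z : ι → ℤ} (hz : z a = 0) (c : ℤ) :
    update z a c ∈ triangularBox (insert a s) R f ↔
      z ∈ triangularBox s R f ∧ |(c : ℝ) + f a z| ≤ R a := by
  have hfa : ∀ k, a ≤ k → f k (update z a c) = f k z := fun k hk =>
    hf k _ _ fun j hj => update_of_ne (hk.trans_lt hj).ne' _ _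
  have hne : ∀ k ∈ s, k ≠ a := fun k hk => (ha k hk).ne'
  simp only [triangularBox, Set.mem_ofPred_eq, mem_insert, forall_eq_or_imp, update_self,
    hfa a le_rfl]
  constructor
  · rintro ⟨hout, hc, hin⟩
    refine ⟨⟨fun k hk => ?_, fun k hk => ?_⟩, hc⟩
    · by_cases hka : k = a
      · rwa [hka]
      · simpa [update_of_ne hka] using hout k (by tauto)
    · simpa [update_of_ne (hne k hk), hfa k (ha k hk).le] using hin k hk
  · rintro ⟨⟨hout, hin⟩, hc⟩
    refine ⟨fun k hk => ?_, hc, fun k hk => ?_⟩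
    · rw [update_of_ne (by tauto)]; exact hout k (by tauto)
    · simpa [update_of_ne (hne k hk), hfa k (ha k hk).le] using hin k hk

lemma triangularBox_finite (hf : ∀ k z z', (∀ j, k < j → z j = z' j) → f k z = f k z') :
    (triangularBox s R f).Finite := by
  induction s using Finset.induction_on_min with
  | empty => simp [triangularBox_empty]
  | insert a s ha ih =>
    refine (ih.biUnion fun z _ => (Icc ⌈-R a - f a z⌉ ⌊R a - f a z⌋).finite_toSet.image
      (update z a)).subset fun w hw => ?_
    have hw' : update (update w a 0) a (w a) ∈ triangularBox (insert a s) R f := by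
      simpa using hw
    rw [update_mem_triangularBox_insert_iff hf ha (update_self ..)] at hw'
    exact Set.mem_biUnion hw'.1 ⟨w a, mem_Icc_ceil_floor_iff.2 hw'.2, by simp⟩

lemma prod_le_ncard_triangularBox
    (hf : ∀ k z z', (∀ j, k < j → z j = z' j) → f k z = f k z')
    (hR : ∀ k ∈ s, 1 ≤ R k) :
    ∏ k ∈ s, R k ≤ (triangularBox s R f).ncard := by
  induction s using Finset.induction_on_min with
  | empty => simp [triangularBox_empty]
  | insert a s ha ih =>
    have hfin := triangularBox_finite (s := s) (R := R) hf
    set Z := hfin.toFinset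
    set C : (ι → ℤ) → Finset ℤ := fun z => Icc ⌈-R a - f a z⌉ ⌊R a - f a z⌋
    have hRa : 1 ≤ R a := hR a (mem_insert_self a s)
    have hvanish : ∀ z ∈ triangularBox s R f, z a = 0 := fun z hz =>
      hz.1 a fun has => (ha a has).false
    have hmaps : ∀ p ∈ Z.sigma C, update p.1 a p.2 ∈ triangularBox (insert a s) R f := by
      rintro ⟨z, c⟩ hp
      rw [mem_sigma, Set.Finite.mem_toFinset] at hp
      exact (update_mem_triangularBox_insert_iff hf ha (hvanish z hp.1) c).2
        ⟨hp.1, mem_Icc_ceil_floor_iff.1 hp.2⟩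
    have hinj : Set.InjOn (fun p : Σ _ : ι → ℤ, ℤ => update p.1 a p.2) (Z.sigma C) := by
      rintro ⟨z, c⟩ hp ⟨z', c'⟩ hp' h
      rw [coe_sigma, Set.mem_sigma_iff, Set.Finite.coe_toFinset] at hp hp'
      have hc : c = c' := by simpa using congrFun h a
      have hz : z = z' := by
        have h0 := congrArg (update · a 0) h
        simp only [update_idem] at h0
        rwa [update_eq_self_iff.2 (hvanish z hp.1).symm,
          update_eq_self_iff.2 (hvanish z' hp'.1).symm] at h0
      subst hc hz; rfl
    calc ∏ k ∈ insert a s, R k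
        = R a * ∏ k ∈ s, R k := prod_insert fun has => (ha a has).false
      _ ≤ R a * #Z := by
        rw [← Set.ncard_eq_toFinset_card _ hfin]
        gcongr
        exact ih fun k hk => hR k (mem_insert_of_mem hk)
      _ ≤ ∑ z ∈ Z, (#(C z) : ℝ) := by
        rw [mul_comm, ← nsmul_eq_mul, ← sum_const]
        exact sum_le_sum fun z _ => by
          linarith [two_mul_sub_one_le_card_Icc_ceil_floor (R a) (f a z)]
      _ = #(Z.sigma C) := by rw [card_sigma]; push_cast; rfl
      _ ≤ (triangularBox (insert a s) R f).ncard := by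
        rw [← Set.ncard_coe_finset]
        exact_mod_cast Set.ncard_le_ncard_of_injOn _ hmaps hinj
          (triangularBox_finite hf)

end TriangularBox

lemma norm_sum_smul_sq_of_pairwise_orthogonal {ι E : Type*} [NormedAddCommGroup E]
    [InnerProductSpace ℝ E] {v : ι → E} (hv : Pairwise fun j k => ⟪v j, v k⟫_ℝ = 0)
    (c : ι → ℝ) (s : Finset ι) :
    ‖∑ k ∈ s, c k • v k‖ ^ 2 = ∑ k ∈ s, c k ^ 2 * ‖v k‖ ^ 2 := by
  classical
  rw [← real_inner_self_eq_norm_sq, inner_sum]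
  refine sum_congr rfl fun k hk => ?_
  rw [sum_inner, sum_eq_single_of_mem k hk fun l _ hlk => by
    rw [real_inner_smul_left, real_inner_smul_right, hv hlk, mul_zero, mul_zero]]
  rw [real_inner_smul_left, real_inner_smul_right, real_inner_self_eq_norm_sq]
  ring

lemma sum_sq_div_sqrt_mul_mul_sq_le {ι : Type*} (s : Finset ι) {g : ι → ℝ}
    (hg : ∀ k ∈ s, g k ≠ 0) (B : ℝ) {d : ℕ} (hs : #s ≤ d) :
    ∑ k ∈ s, (B / (√d * g k)) ^ 2 * g k ^ 2 ≤ B ^ 2 := by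
  have hterm : ∀ k ∈ s, (B / (√d * g k)) ^ 2 * g k ^ 2 = B ^ 2 / d := fun k hk => by
    rw [div_pow, mul_pow, Real.sq_sqrt (Nat.cast_nonneg d), div_mul_eq_mul_div,
      mul_div_mul_right _ _ (pow_ne_zero 2 (hg k hk))]
  rw [sum_congr rfl hterm, sum_const, nsmul_eq_mul]
  calc (#s : ℝ) * (B ^ 2 / d) ≤ d * (B ^ 2 / d) := by gcongr
    _ ≤ B ^ 2 := by
      rcases d.eq_zero_or_pos with rfl | hd
      · simp [sq_nonneg]
      · rw [mul_div_cancel₀ _ (by positivity)]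

section GramSchmidt

variable {n d : ℕ} (b : Fin d → EuclideanSpace ℝ (Fin n))

/-- The Gram–Schmidt coefficient `μ_{j,k}`. -/
noncomputable def gsCoeff (j k : Fin d) : ℝ := ⟪gso b k, b j⟫_ℝ / ‖gso b k‖ ^ 2

lemma gso_pairwise_orthogonal : Pairwise fun j k => ⟪gso b j, gso b k⟫_ℝ = 0 :=
  @InnerProductSpace.gramSchmidt_pairwise_orthogonal ℝ _ _ _ _ (Fin d) _ _
    Finite.to_wellFoundedLT b

lemma gso_ne_zero (hb : LinearIndependent ℝ b) (j : Fin d) : gso b j ≠ 0 :=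
  @InnerProductSpace.gramSchmidt_ne_zero ℝ _ _ _ _ (Fin d) _ _ Finite.to_wellFoundedLT b j hb

lemma eq_gso_add_sum_gsCoeff_smul (j : Fin d) :
    b j = gso b j + ∑ k ∈ Iio j, gsCoeff b j k • gso b k := by
  simpa [gsCoeff, gso] using
    @InnerProductSpace.gramSchmidt_def'' ℝ _ _ _ _ (Fin d) _ _ Finite.to_wellFoundedLT b j

lemma span_gso_image_Iio (i : Fin d) :
    Submodule.span ℝ (gso b '' Set.Iio i) = Submodule.span ℝ (b '' Set.Iio i) :=
  @InnerProductSpace.span_gramSchmidt_Iio ℝ _ _ _ _ (Fin d) _ _ Finite.to_wellFoundedLT b i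

lemma starProjection_orthogonal_gso (i k : Fin d) :
    (Submodule.span ℝ (b '' Set.Iio i))ᗮ.starProjection (gso b k) =
      if i ≤ k then gso b k else 0 := by
  rw [← span_gso_image_Iio]
  split_ifs with hik
  · refine Submodule.starProjection_eq_self_iff.2 <| Submodule.isOrtho_iff_le.1
      (Submodule.isOrtho_span.2 ?_) (Submodule.mem_span_singleton_self _)
    rintro _ rfl _ ⟨l, hl, rfl⟩
    exact gso_pairwise_orthogonal b (hl.trans_le hik).ne'
  · refine (Submodule.starProjection_apply_eq_zero_iff _).2 ?_
    exact Submodule.le_orthogonal_orthogonal _ (Submodule.subset_span ⟨k, not_le.1 hik, rfl⟩)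

lemma gsProj_eq_gso_add_sum (i : Fin d) (j : {j : Fin d // i ≤ j}) :
    gsProj b i j = gso b j + ∑ k with k < j, gsCoeff b j k • gso b k := by
  rw [gsProj, ← Submodule.starProjection_apply, eq_gso_add_sum_gsCoeff_smul b j, map_add, map_sum]
  simp only [map_smul, Set.Iio_def, starProjection_orthogonal_gso, if_pos j.2, smul_ite, smul_zero]
  rw [← sum_filter, ← sum_subtype_eq_sum_filter]
  congr 2
  ext k
  simp

end GramSchmidt

section ProjectedLattice

variable {n d : ℕ} (b : Fin d → EuclideanSpace ℝ (Fin n)) (i : Fin d)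

noncomputable def gsTail (k : {j : Fin d // i ≤ j}) (c : {j : Fin d // i ≤ j} → ℝ) : ℝ :=
  ∑ j with k < j, gsCoeff b j k * c j

lemma gsTail_congr (k : {j : Fin d // i ≤ j}) (z z' : {j : Fin d // i ≤ j} → ℤ)
    (h : ∀ j, k < j → z j = z' j) : gsTail b i k (z ·) = gsTail b i k (z' ·) :=
  sum_congr rfl fun j hj => by simp only [h j (mem_filter.1 hj).2]

lemma sum_smul_gsProj_eq (c : {j : Fin d // i ≤ j} → ℝ) :
    ∑ j, c j • gsProj b i j = ∑ k, (c k + gsTail b i k c) • gso b k := by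
  simp only [gsProj_eq_gso_add_sum, smul_add, smul_sum, smul_smul, sum_add_distrib, add_smul,
    gsTail, sum_smul]
  congr 1
  simp only [mul_comm (gsCoeff _ _ _)]
  exact sum_comm' fun j k => by simp

lemma norm_sum_smul_gsProj_sq (c : {j : Fin d // i ≤ j} → ℝ) :
    ‖∑ j, c j • gsProj b i j‖ ^ 2 =
      ∑ k, (c k + gsTail b i k c) ^ 2 * ‖gso b k‖ ^ 2 := by
  rw [sum_smul_gsProj_eq]
  exact norm_sum_smul_sq_of_pairwise_orthogonal
    ((gso_pairwise_orthogonal b).comp_of_injective Subtype.val_injective) _ _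

def enumerationSet (B : ℝ) : Set ({j : Fin d // i ≤ j} → ℤ) :=
  {z | ‖∑ j, (z j : ℝ) • gsProj b i j‖ ≤ B}

lemma enumerationSet_subset_triangularBox (hb : LinearIndependent ℝ b) (B : ℝ) :
    enumerationSet b i B ⊆
      triangularBox univ (fun k => B / ‖gso b k‖) (fun k z => gsTail b i k (z ·)) := by
  intro z hz
  refine ⟨fun k hk => absurd (mem_univ k) hk, fun k _ => ?_⟩
  dsimp only
  have hg : 0 < ‖gso b k‖ := norm_pos_iff.2 (gso_ne_zero b hb k)
  rw [le_div_iff₀ hg, ← abs_of_pos hg, ← abs_mul]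
  refine abs_le_of_sq_le_sq ?_ ((norm_nonneg _).trans hz)
  calc (((z k : ℝ) + gsTail b i k (z ·)) * ‖gso b k‖) ^ 2
      = ((z k : ℝ) + gsTail b i k (z ·)) ^ 2 * ‖gso b k‖ ^ 2 := mul_pow _ _ _
    _ ≤ ∑ k, ((z k : ℝ) + gsTail b i k (z ·)) ^ 2 * ‖gso b k‖ ^ 2 :=
      single_le_sum (f := fun k => ((z k : ℝ) + gsTail b i k (z ·)) ^ 2 * ‖gso b k‖ ^ 2)
        (fun k _ => by positivity) (mem_univ k)
    _ = ‖∑ j, (z j : ℝ) • gsProj b i j‖ ^ 2 := (norm_sum_smul_gsProj_sq b i _).symm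
    _ ≤ B ^ 2 := pow_le_pow_left₀ (norm_nonneg _) hz 2

lemma triangularBox_subset_enumerationSet {B : ℝ} (hB : 0 ≤ B)
    {R : {j : Fin d // i ≤ j} → ℝ}
    (hR : ∑ k, R k ^ 2 * ‖gso b k‖ ^ 2 ≤ B ^ 2) :
    triangularBox univ R (fun k z => gsTail b i k (z ·)) ⊆ enumerationSet b i B := by
  rintro z ⟨-, hz⟩
  refine le_of_sq_le_sq ?_ hB
  rw [norm_sum_smul_gsProj_sq]
  refine le_trans (sum_le_sum fun k _ => ?_) hR
  have hzk := abs_le.1 (hz k (mem_univ k))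
  exact mul_le_mul_of_nonneg_right (sq_le_sq' hzk.1 hzk.2) (by positivity)

end ProjectedLattice

/-- from Theorem 3 of the paper. If `‖bⱼ*‖ ≤ ‖b₁‖/√d` for all `j ≥ i`,
the number of integer points in the enumeration ellipsoid of Kannan's algorithm is at least
`2^{-(d-i+1)} ∏_{j≥i} ‖b₁‖/(√d ‖bⱼ*‖)`. -/
theorem kannan_enumeration_count_lower_bound
    (n d : ℕ) (b : Fin d → EuclideanSpace ℝ (Fin n)) (hb : LinearIndependent ℝ b)
    (i : Fin d)
    (hsmall : ∀ j : Fin d, i ≤ j → ‖gso b j‖ ≤ ‖b ⟨0, i.pos⟩‖ / Real.sqrt d) :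
    ((1 : ℝ) / 2) ^ (d - (i : ℕ)) *
        ∏ j ∈ Finset.Ici i, ‖b ⟨0, i.pos⟩‖ / (Real.sqrt d * ‖gso b j‖) ≤
      (({z : {j : Fin d // i ≤ j} → ℤ |
          ‖∑ j, (z j : ℝ) • gsProj b i j.1‖ ≤ ‖b ⟨0, i.pos⟩‖}).ncard : ℝ) := by
  set B := ‖b ⟨0, i.pos⟩‖
  have hB : 0 < B := norm_pos_iff.2 (hb.ne_zero _)
  have hd : 0 < √(d : ℝ) := Real.sqrt_pos.2 (by exact_mod_cast i.pos)
  have hg (k : Fin d) : 0 < ‖gso b k‖ := norm_pos_iff.2 (gso_ne_zero b hb k)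
  set R : {j : Fin d // i ≤ j} → ℝ := fun k => B / (√d * ‖gso b k‖)
  have hR : ∀ k ∈ univ, 1 ≤ R k := fun k _ => by
    rw [one_le_div (mul_pos hd (hg k)), ← le_div_iff₀' hd]
    exact hsmall k k.2
  have hRsum : ∑ k, R k ^ 2 * ‖gso b k‖ ^ 2 ≤ B ^ 2 :=
    sum_sq_div_sqrt_mul_mul_sq_le (univ : Finset {j : Fin d // i ≤ j}) (fun k _ => (hg k).ne') B
      (card_univ.trans_le (Fintype.card_subtype_le _) |>.trans_eq (Fintype.card_fin d))
  have hfin := (triangularBox_finite (s := univ) (gsTail_congr b i)).subset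
    (enumerationSet_subset_triangularBox b i hb B)
  calc ((1 : ℝ) / 2) ^ (d - (i : ℕ)) * ∏ j ∈ Ici i, B / (√d * ‖gso b j‖)
      ≤ ∏ j ∈ Ici i, B / (√d * ‖gso b j‖) :=
        mul_le_of_le_one_left (prod_nonneg fun j _ => by positivity)
          (pow_le_one₀ (by norm_num) (by norm_num))
    _ = ∏ k, R k := prod_subtype _ (fun j => mem_Ici) _
    _ ≤ (triangularBox univ R _).ncard := prod_le_ncard_triangularBox (gsTail_congr b i) hR
    _ ≤ (enumerationSet b i B).ncard := by
        exact_mod_cast Set.ncard_le_ncard (triangularBox_subset_enumerationSet b i hB.le hRsum) hfin
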